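/- Suppose f: [0,∞) → (0,∞) is continuous and f(x) ~ x^{−β} as x → ∞ for some β > 0. Let F(x) = ∫₁ˣ du/f(u). Then F⁻¹(x) ~ ((β+1)x)^{1/(1+β)} as x → ∞. -/

import Mathlib

/-!
Since `1 / f u ~ u ^ β` and `∫₁ˣ u ^ β du → ∞`, integrating the asymptotic equivalence gives
`F x ~ x ^ (β + 1) / (β + 1)`. As `F` is increasing, `F⁻¹ t → ∞`, so substituting `x = F⁻¹ t`
yields `t ~ (F⁻¹ t) ^ (β + 1) / (β + 1)`, and taking `(β + 1)`-th roots gives the claim.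
-/

open Filter Real Set Asymptotics MeasureTheory intervalIntegral

theorem isLittleO_intervalIntegral_atTop {g h : ℝ → ℝ} {a : ℝ} (hgh : g =o[atTop] h)
    (hh : 0 ≤ᶠ[atTop] h) (hg_int : ∀ b ≥ a, IntervalIntegrable g volume a b)
    (hh_int : ∀ b ≥ a, IntervalIntegrable h volume a b)
    (h_top : Tendsto (fun x => ∫ u in a..x, h u) atTop atTop) :
    (fun x => ∫ u in a..x, g u) =o[atTop] fun x => ∫ u in a..x, h u := by
  refine isLittleO_iff.2 fun ε hε => ?_
  -- Beyond `B`, `|g| ≤ ε/2 · h`; the integrals over `[a, B]` form a constant `C`, which the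
  -- divergent `∫ h` eventually absorbs.
  obtain ⟨A, hA⟩ := eventually_atTop.1 ((isLittleO_iff.1 hgh (half_pos hε)).and hh)
  set B := max A a
  set C := ‖∫ u in a..B, g u‖ + ε / 2 * ‖∫ u in a..B, h u‖
  filter_upwards [eventually_ge_atTop B, h_top.eventually_ge_atTop (2 * C / ε)] with x hBx hCx
  have hB : a ≤ B := le_max_right A a
  have hx : a ≤ x := hB.trans hBx
  have h_tail : ‖∫ u in B..x, g u‖ ≤ ε / 2 * ((∫ u in a..x, h u) - ∫ u in a..B, h u) := by
    rw [integral_interval_sub_left (hh_int x hx) (hh_int B hB),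
      ← intervalIntegral.integral_const_mul]
    refine norm_integral_le_of_norm_le hBx (ae_of_all _ fun u hu => ?_)
      (((hh_int B hB).symm.trans (hh_int x hx)).const_mul _)
    have := hA u ((le_max_left A a).trans hu.1.le)
    simpa [abs_of_nonneg this.2] using this.1
  have hC : C ≤ ε / 2 * ∫ u in a..x, h u := by
    rw [div_le_iff₀ hε] at hCx; linarith
  have h_nonneg : 0 ≤ ∫ u in a..x, h u := le_trans (by positivity) hCx
  calc ‖∫ u in a..x, g u‖
      = ‖(∫ u in a..B, g u) + ∫ u in B..x, g u‖ := by
        rw [integral_add_adjacent_intervals (hg_int B hB) ((hg_int B hB).symm.trans (hg_int x hx))]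
    _ ≤ C + ε / 2 * ∫ u in a..x, h u := by
        have := norm_add_le (∫ u in a..B, g u) (∫ u in B..x, g u)
        have := mul_le_mul_of_nonneg_left (neg_le_abs (∫ u in a..B, h u)) (half_pos hε).le
        simp only [C, Real.norm_eq_abs] at *
        linarith
    _ ≤ ε * ‖∫ u in a..x, h u‖ := by
        rw [Real.norm_of_nonneg h_nonneg]; linarith

theorem Asymptotics.IsEquivalent.intervalIntegral_atTop {g h : ℝ → ℝ} {a : ℝ}
    (hgh : g ~[atTop] h) (hh : 0 ≤ᶠ[atTop] h)
    (hg_int : ∀ b ≥ a, IntervalIntegrable g volume a b)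
    (hh_int : ∀ b ≥ a, IntervalIntegrable h volume a b)
    (h_top : Tendsto (fun x => ∫ u in a..x, h u) atTop atTop) :
    (fun x => ∫ u in a..x, g u) ~[atTop] fun x => ∫ u in a..x, h u := by
  refine (isLittleO_intervalIntegral_atTop hgh.isLittleO hh
    (fun b hb => (hg_int b hb).sub (hh_int b hb)) hh_int h_top).congr' ?_ EventuallyEq.rfl
  filter_upwards [eventually_ge_atTop a] with x hx
  exact integral_sub (hg_int x hx) (hh_int x hx)

theorem Asymptotics.IsEquivalent.rpow_of_eventually_nonneg {α : Type*} {u v : α → ℝ}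
    {l : Filter α} (hv : 0 ≤ᶠ[l] v) (h : u ~[l] v) (r : ℝ) : u ^ r ~[l] v ^ r := by
  have hv_max : v =ᶠ[l] fun x => max (v x) 0 := hv.mono fun x hx => (max_eq_left hx).symm
  refine ((h.congr_right hv_max).rpow fun x => le_max_right (v x) 0).congr_right ?_
  filter_upwards [hv_max] with x hx
  simp only [Pi.pow_apply]
  rw [← hx]

theorem monotoneOn_intervalIntegral_of_nonneg {g : ℝ → ℝ} {a : ℝ} (hg : ∀ x > a, 0 ≤ g x)
    (hg_int : ∀ b ≥ a, IntervalIntegrable g volume a b) :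
    MonotoneOn (fun x => ∫ u in a..x, g u) (Ici a) := fun _ hx y hy hxy =>
  integral_mono_interval le_rfl hx hxy
    (ae_restrict_of_forall_mem measurableSet_Ioc fun u hu => hg u hu.1) (hg_int y hy)

theorem MonotoneOn.tendsto_atTop_of_rightInverse {α β : Type*} [LinearOrder α] [LinearOrder β]
    [NoMaxOrder β] {F : α → β} {G : β → α} {a : α} (hF : MonotoneOn F (Ici a))
    (hG : ∀ᶠ t in atTop, a ≤ G t ∧ F (G t) = t) : Tendsto G atTop atTop := by
  refine tendsto_atTop.2 fun M => ?_
  filter_upwards [hG, eventually_gt_atTop (F (max M a))] with t ⟨haG, hFG⟩ ht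
  by_contra! hGM
  have := hF haG (le_max_right M a) (hGM.le.trans (le_max_left M a))
  rw [hFG] at this
  exact this.not_gt ht

theorem isEquivalent_integral_one_div_of_tendsto_mul_rpow {f : ℝ → ℝ} {β : ℝ} (hβ : -1 < β)
    (hf_int : ∀ b ≥ 1, IntervalIntegrable (fun u => 1 / f u) volume 1 b)
    (hf : Tendsto (fun x => f x * x ^ β) atTop (nhds 1)) :
    (fun x => ∫ u in (1:ℝ)..x, 1 / f u) ~[atTop] fun x => x ^ (β + 1) / (β + 1) := by
  have hβ1 : 0 < β + 1 := by linarith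
  have h_equiv : (fun u => 1 / f u) ~[atTop] fun u => u ^ β := by
    refine isEquivalent_of_tendsto_one ?_
    convert hf.inv₀ one_ne_zero using 2 with x
    · rw [Pi.div_apply, div_div, one_div]
    · exact inv_one.symm
  have h_pow (x : ℝ) : ∫ u in (1:ℝ)..x, u ^ β = (x ^ (β + 1) - 1) / (β + 1) := by
    rw [integral_rpow (Or.inl hβ), one_rpow]
  have h_top : Tendsto (fun x => ∫ u in (1:ℝ)..x, u ^ β) atTop atTop := by
    simp only [h_pow]
    exact ((tendsto_rpow_atTop hβ1).atTop_add tendsto_const_nhds).atTop_div_const hβ1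
  have h_sub : (fun x => ∫ u in (1:ℝ)..x, u ^ β) ~[atTop] fun x => x ^ (β + 1) / (β + 1) := by
    refine ((IsEquivalent.refl.add_const_of_norm_tendsto_atTop (c := 1 / (β + 1))
      (tendsto_norm_atTop_atTop.comp h_top)).congr_left ?_).symm
    refine Eventually.of_forall fun x => ?_
    simp only [h_pow]
    field_simp
    ring
  refine (h_equiv.intervalIntegral_atTop ?_ hf_int
    (fun b _ => intervalIntegral.intervalIntegrable_rpow' hβ) h_top).trans h_sub
  filter_upwards [eventually_ge_atTop 0] with u hu
  exact rpow_nonneg hu β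

theorem isEquivalent_rpow_of_rightInverse {F G : ℝ → ℝ} {p : ℝ} (hp : 0 < p)
    (hF : F ~[atTop] fun x => x ^ p / p) (hG : Tendsto G atTop atTop)
    (hFG : ∀ᶠ t in atTop, F (G t) = t) :
    G ~[atTop] fun t => (p * t) ^ (1 / p) := by
  have h_id : (fun t => t) ~[atTop] fun t => G t ^ p / p :=
    (hF.comp_tendsto hG).congr_left hFG
  have h_pow : (fun t => G t ^ p) ~[atTop] fun t => p * t :=
    ((IsEquivalent.refl (u := fun _ => p)).mul h_id.symm).congr_left
      (Eventually.of_forall fun t => mul_div_cancel₀ _ hp.ne')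
  refine (h_pow.rpow_of_eventually_nonneg ?_ (1 / p)).congr_left ?_
  · filter_upwards [eventually_ge_atTop 0] with t ht
    positivity
  · filter_upwards [hG.eventually_ge_atTop 0] with t ht
    rw [Pi.pow_apply, ← rpow_mul ht, mul_one_div_cancel hp.ne', rpow_one]

theorem stmt_14_general (f F Finv : ℝ → ℝ) (β : ℝ)
    (hβ : 0 < β)
    (hf_cont : ContinuousOn f (Set.Ici 0))
    (hf_pos : ∀ x ∈ Set.Ici (0:ℝ), 0 < f x)
    (hasym : Tendsto (fun x => f x * x ^ β) atTop (nhds 1))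
    (hF : ∀ x > (0:ℝ), F x = ∫ u in (1:ℝ)..x, 1 / f u)
    (hFinv_right : ∀ t ≥ (0:ℝ), F (Finv t) = t)
    (hFinv_ge : ∀ t ≥ (0:ℝ), 1 ≤ Finv t) :
    Tendsto (fun x => Finv x / (((β + 1) * x) ^ (1 / (1 + β)))) atTop (nhds 1) := by
  have h_cont : ContinuousOn (fun u => 1 / f u) (Ici 1) :=
    (continuousOn_const.div hf_cont fun x hx => (hf_pos x hx).ne').mono
      (Ici_subset_Ici.2 zero_le_one)
  have h_int : ∀ b ≥ 1, IntervalIntegrable (fun u => 1 / f u) volume 1 b := fun b hb =>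
    (h_cont.mono Icc_subset_Ici_self).intervalIntegrable_of_Icc hb
  have hF_eq : EqOn (fun x => ∫ u in (1:ℝ)..x, 1 / f u) F (Ici 1) := fun x hx =>
    (hF x (zero_lt_one.trans_le hx)).symm
  have hF_equiv : F ~[atTop] fun x => x ^ (β + 1) / (β + 1) :=
    (isEquivalent_integral_one_div_of_tendsto_mul_rpow (by linarith) h_int hasym).congr_left
      (eventually_ge_atTop 1 |>.mono hF_eq)
  have hF_mono : MonotoneOn F (Ici 1) :=
    (monotoneOn_intervalIntegral_of_nonneg (fun u hu => (one_div_pos.2 (hf_pos u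
      (zero_le_one.trans hu.le))).le) h_int).congr hF_eq
  have hFinv_top : Tendsto Finv atTop atTop := hF_mono.tendsto_atTop_of_rightInverse <|
    eventually_ge_atTop 0 |>.mono fun t ht => ⟨hFinv_ge t ht, hFinv_right t ht⟩
  have h_root := isEquivalent_rpow_of_rightInverse (by linarith) hF_equiv hFinv_top
    (eventually_ge_atTop 0 |>.mono hFinv_right)
  rw [add_comm 1 β]
  refine (isEquivalent_iff_tendsto_one ?_).1 h_root
  filter_upwards [eventually_gt_atTop 0] with t ht
  positivity

theorem stmt_14 (f F Finv : ℝ → ℝ) (β : ℝ)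
    (hβ : 0 < β)
    (hf_cont : ContinuousOn f (Set.Ici 0))
    (hf_pos : ∀ x ∈ Set.Ici (0:ℝ), 0 < f x)
    (hasym : Tendsto (fun x => f x * x ^ β) atTop (nhds 1))
    (hF : ∀ x > (0:ℝ), F x = ∫ u in (1:ℝ)..x, 1 / f u)
    (hFinv_right : ∀ t ≥ (0:ℝ), F (Finv t) = t)
    (hFinv_ge : ∀ t ≥ (0:ℝ), 1 ≤ Finv t)
    (hFinv_left : ∀ x ≥ (1:ℝ), Finv (F x) = x) :
    Tendsto (fun x => Finv x / (((β + 1) * x) ^ (1 / (1 + β)))) atTop (nhds 1) :=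
  stmt_14_general f F Finv β hβ hf_cont hf_pos hasym hF hFinv_right hFinv_ge
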